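/- arXiv:2110.11066 — 2 statements merged into one kernel-verified Lean document; each statement's English description precedes it below -/
import Mathlib

section
/- (Type A_n, Proposition on fundamental weights, part (ii).) Let n ≥ 1 and j ∈ {1, …, n}. Then ℓ_{ϖ₁}⁻(ϖ_j) = j; that is, the least k such that some composition w of k simple reflections of type A_n satisfies ⟨w ϖ_j, ϖ₁⟩ < 0 equals j, and it is attained by w = s₁ ∘ s₂ ∘ ⋯ ∘ s_j (with s_j applied first). -/
/-!
Every simple reflection permutes coordinates and so preserves the coordinate sum, which is `0`
for all weights; on such vectors `⟪v, ϖ₁⟫` is the first coordinate `v₀`. Hence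
`⟪w ϖⱼ, ϖ₁⟫ = [σ 0 < j] - j/(n+1)`, where `σ 0` is the coordinate of `ϖⱼ` that `w` moves into
position `0`. This is negative exactly when `σ 0 ≥ j`, and each reflection moves the tracked
index by at most one, so at least `j` reflections are needed; `s₁ ∘ ⋯ ∘ sⱼ` carries index `j`
to `0`.
-/

open scoped RealInnerProductSpace

/-- The `j`-th simple reflection of type `Aₙ` (`1 ≤ j ≤ n`), acting on `ℝ^{n+1}`:
it transposes the coordinates numbered `j` and `j+1` (in `1`-based numbering). -/
noncomputable def sA (n j : ℕ) :
    EuclideanSpace ℝ (Fin (n + 1)) → EuclideanSpace ℝ (Fin (n + 1)) :=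
  fun v => WithLp.toLp 2 fun i =>
    v ⟨(if (i : ℕ) + 1 = j then j else if (i : ℕ) = j then j - 1 else (i : ℕ)) % (n + 1),
      Nat.mod_lt _ (Nat.succ_pos n)⟩

/-- The composition of the simple reflections indexed by the entries of `l`
(the last entry of the list is applied first). -/
noncomputable def compA (n : ℕ) (l : List ℕ) :
    EuclideanSpace ℝ (Fin (n + 1)) → EuclideanSpace ℝ (Fin (n + 1)) :=
  l.foldr (fun j g => sA n j ∘ g) id

/-- The fundamental weight `ϖⱼ = e₁ + ⋯ + eⱼ − (j/(n+1))·ε` of type `Aₙ` (`1 ≤ j ≤ n`). -/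
noncomputable def wtA (n j : ℕ) : EuclideanSpace ℝ (Fin (n + 1)) :=
  WithLp.toLp 2 fun i => (if (i : ℕ) < j then 1 else 0) - (j : ℝ) / ((n : ℝ) + 1)

/-- The index read by `sA n m` at (0-based) position `a`: the transposition of `m - 1` and `m`. -/
def swapIdx (m a : ℕ) : ℕ := if a + 1 = m then m else if a = m then m - 1 else a

def compIdx (l : List ℕ) (a : ℕ) : ℕ := l.foldl (fun a m => swapIdx m a) a

lemma compIdx_cons (m : ℕ) (l : List ℕ) (a : ℕ) :
    compIdx (m :: l) a = compIdx l (swapIdx m a) := rfl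

lemma swapIdx_lt {n m a : ℕ} (hm : m ≤ n) (ha : a < n + 1) : swapIdx m a < n + 1 := by
  unfold swapIdx; split_ifs <;> omega

lemma swapIdx_le_succ (m a : ℕ) : swapIdx m a ≤ a + 1 := by
  unfold swapIdx; split_ifs <;> omega

lemma swapIdx_swapIdx (m a : ℕ) : swapIdx m (swapIdx m a) = a := by
  unfold swapIdx; split_ifs <;> omega

lemma compIdx_le_add_length (l : List ℕ) (a : ℕ) : compIdx l a ≤ a + l.length := by
  induction l generalizing a with
  | nil => simp [compIdx]
  | cons m l ih =>
    rw [compIdx_cons, List.length_cons]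
    have := ih (swapIdx m a)
    have := swapIdx_le_succ m a
    omega

lemma compIdx_lt {n : ℕ} {l : List ℕ} (hl : ∀ m ∈ l, m ≤ n) {a : ℕ} (ha : a < n + 1) :
    compIdx l a < n + 1 := by
  induction l generalizing a with
  | nil => exact ha
  | cons m l ih =>
    exact ih (fun m' hm' => hl m' (List.mem_cons_of_mem _ hm'))
      (swapIdx_lt (hl m List.mem_cons_self) ha)

lemma compIdx_range' (s t : ℕ) : compIdx (List.range' (s + 1) t) s = s + t := by
  induction t generalizing s with
  | zero => rfl
  | succ t ih =>
    rw [List.range'_succ, compIdx_cons, show swapIdx (s + 1) s = s + 1 by simp [swapIdx], ih]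
    omega

lemma sA_apply {n m : ℕ} (hm : m ≤ n) (v : EuclideanSpace ℝ (Fin (n + 1))) (i : Fin (n + 1)) :
    sA n m v i = v ⟨swapIdx m i, swapIdx_lt hm i.2⟩ := by
  exact congrArg v (Fin.ext (Nat.mod_eq_of_lt (swapIdx_lt hm i.2)))

lemma compA_apply {n : ℕ} {l : List ℕ} (hl : ∀ m ∈ l, m ≤ n)
    (v : EuclideanSpace ℝ (Fin (n + 1))) (i : Fin (n + 1)) :
    compA n l v i = v ⟨compIdx l i, compIdx_lt hl i.2⟩ := by
  induction l generalizing i with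
  | nil => rfl
  | cons m l ih =>
    have hl' : ∀ m' ∈ l, m' ≤ n := fun m' hm' => hl m' (List.mem_cons_of_mem _ hm')
    change sA n m (compA n l v) i = _
    rw [sA_apply (hl m List.mem_cons_self), ih hl']
    rfl

lemma sum_sA {n m : ℕ} (hm : m ≤ n) (v : EuclideanSpace ℝ (Fin (n + 1))) :
    ∑ i, sA n m v i = ∑ i, v i := by
  have hinv : Function.Involutive
      (fun i : Fin (n + 1) => (⟨swapIdx m i, swapIdx_lt hm i.2⟩ : Fin (n + 1))) :=
    fun i => Fin.ext (swapIdx_swapIdx m i)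
  simp only [sA_apply hm]
  exact Fintype.sum_bijective _ hinv.bijective _ _ (fun _ => rfl)

lemma sum_compA {n : ℕ} {l : List ℕ} (hl : ∀ m ∈ l, m ≤ n)
    (v : EuclideanSpace ℝ (Fin (n + 1))) : ∑ i, compA n l v i = ∑ i, v i := by
  induction l with
  | nil => rfl
  | cons m l ih =>
    change ∑ i, sA n m (compA n l v) i = _
    rw [sum_sA (hl m List.mem_cons_self)]
    exact ih (fun m' hm' => hl m' (List.mem_cons_of_mem _ hm'))

lemma sum_wtA {n j : ℕ} (hj : j ≤ n + 1) : ∑ i, wtA n j i = 0 := by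
  have hcount : ∑ i : Fin (n + 1), (if (i : ℕ) < j then (1 : ℝ) else 0) = j := by
    rw [Fin.sum_univ_eq_sum_range (fun i => if i < j then (1 : ℝ) else 0), ← Finset.sum_filter,
      show (Finset.range (n + 1)).filter (· < j) = Finset.range j by
        ext; simp only [Finset.mem_filter, Finset.mem_range]; omega]
    simp
  simp only [wtA, PiLp.toLp_apply, Finset.sum_sub_distrib, hcount, Finset.sum_const,
    Finset.card_univ, Fintype.card_fin, nsmul_eq_mul]
  push_cast
  field_simp
  ring

lemma inner_wtA_one {n : ℕ} {v : EuclideanSpace ℝ (Fin (n + 1))} (hv : ∑ i, v i = 0) :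
    ⟪v, wtA n 1⟫ = v 0 := by
  have hterm : ∀ i : Fin (n + 1), wtA n 1 i * v i =
      (if (i : ℕ) < 1 then v i else 0) - v i * ((1 : ℕ) / ((n : ℝ) + 1)) := by
    intro i; simp only [wtA, PiLp.toLp_apply]; split_ifs <;> ring
  simp only [PiLp.inner_apply, RCLike.inner_apply, conj_trivial, hterm, Finset.sum_sub_distrib,
    ← Finset.sum_mul, hv, zero_mul, sub_zero, Fin.sum_univ_succ]
  simp

lemma inner_compA_wtA {n j : ℕ} {l : List ℕ} (hl : ∀ m ∈ l, m ≤ n) (hj : j ≤ n + 1) :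
    ⟪compA n l (wtA n j), wtA n 1⟫ =
      (if compIdx l 0 < j then (1 : ℝ) else 0) - (j : ℝ) / ((n : ℝ) + 1) := by
  rw [inner_wtA_one (by rw [sum_compA hl, sum_wtA hj]), compA_apply hl]
  rfl

lemma inner_compA_wtA_neg_iff {n j : ℕ} {l : List ℕ} (hl : ∀ m ∈ l, m ≤ n)
    (hj1 : 1 ≤ j) (hjn : j ≤ n) :
    ⟪compA n l (wtA n j), wtA n 1⟫ < 0 ↔ j ≤ compIdx l 0 := by
  have hpos : (0 : ℝ) < (j : ℝ) / ((n : ℝ) + 1) := by positivity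
  have hlt : (j : ℝ) / ((n : ℝ) + 1) < 1 := by
    rw [div_lt_one (by positivity)]
    exact_mod_cast Nat.lt_succ_of_le hjn
  rw [inner_compA_wtA hl (by omega)]
  split_ifs with h
  · exact ⟨fun _ => by linarith, fun h' => absurd h (not_lt.2 h')⟩
  · exact ⟨fun _ => not_lt.1 h, fun _ => by linarith⟩

theorem statement2_general (n j : ℕ) (hj1 : 1 ≤ j) (hjn : j ≤ n) :
    IsLeast {k : ℕ | ∃ l : List ℕ, (∀ m ∈ l, 1 ≤ m ∧ m ≤ n) ∧ l.length = k ∧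
        ⟪compA n l (wtA n j), wtA n 1⟫ < 0} j ∧
      ⟪compA n ((List.range j).map (· + 1)) (wtA n j), wtA n 1⟫ < 0 := by
  have hmem : ∀ m ∈ (List.range j).map (· + 1), 1 ≤ m ∧ m ≤ n := by
    simp only [List.mem_map, List.mem_range]
    rintro m ⟨i, hi, rfl⟩
    omega
  have hneg : ⟪compA n ((List.range j).map (· + 1)) (wtA n j), wtA n 1⟫ < 0 := by
    rw [inner_compA_wtA_neg_iff (fun m hm => (hmem m hm).2) hj1 hjn,
      show (List.range j).map (· + 1) = List.range' 1 j by
        simp [List.range'_eq_map_range, Nat.add_comm]]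
    simpa using (compIdx_range' 0 j).ge
  refine ⟨⟨⟨_, hmem, by simp, hneg⟩, ?_⟩, hneg⟩
  rintro k ⟨l, hl, rfl, hl_neg⟩
  rw [inner_compA_wtA_neg_iff (fun m hm => (hl m hm).2) hj1 hjn] at hl_neg
  simpa using hl_neg.trans (compIdx_le_add_length l 0)

theorem statement2 (n j : ℕ) (hn : 1 ≤ n) (hj1 : 1 ≤ j) (hjn : j ≤ n) :
    IsLeast {k : ℕ | ∃ l : List ℕ, (∀ m ∈ l, 1 ≤ m ∧ m ≤ n) ∧ l.length = k ∧
        ⟪compA n l (wtA n j), wtA n 1⟫ < 0} j ∧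
      ⟪compA n ((List.range j).map (· + 1)) (wtA n j), wtA n 1⟫ < 0 :=
  statement2_general n j hj1 hjn
end

section
/- (Type A_n, Proposition on fundamental weights, parts (i) and (iii).) Let n ≥ 1 and j ∈ {1, …, ⌊(n+1)/2⌋}. Then the minimum over k ∈ {1, …, n} of ℓ_{ϖ_j}⁻(ϖ_k) equals j and is attained at k = 1: ℓ_{ϖ_j}⁻(ϖ₁) = j. Moreover, the only linear map of ℝ^{n+1} expressible as a composition of at most j simple reflections of type A_n and satisfying ⟨w ϖ₁, ϖ_j⟩ < 0 is w = s_j ∘ s_{j−1} ∘ ⋯ ∘ s₁ (with s₁ applied first). In particular, for j = 1 the minimum is 1, attained only by s₁. -/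
open scoped RealInnerProductSpace

/-!
Write `w = s_{m₁} ∘ ⋯ ∘ s_{m_r}` as the coordinate permutation `v ↦ v ∘ σ`. Then
`⟪w ϖ_k, ϖ_j⟫ = c - kj/(n+1)`, where `c` counts the positions `i < j` with `σ i < k`. The
inversion number of `σ` is at most `r`, and at least `(j - c)(k - c)`: each position `i < j` sent
to `≥ k` forms an inversion with each position `≥ j` sent below `k`. Negativity, i.e.
`c(n+1) < kj`, together with `2j ≤ n+1` gives `2c < k`, hence `(j - c)(k - c) ≥ (j - c)(c + 1) ≥ j`.

For `k = 1` negativity means `c = 0`, and when moreover `r ≤ j` the inversion set of `σ` is forced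
to be `{(x, j) | x < j}`. That is also the inversion set of the cycle `(0 1 ⋯ j)` realised by
`s_j ∘ ⋯ ∘ s₁`, and a permutation is determined by its inversion set.
-/

open Finset Equiv

theorem Finset.card_filter_comp_perm {α : Type*} [Fintype α] (σ : Perm α) (p : α → Prop)
    [DecidablePred p] : #{i | p (σ i)} = #{i | p i} := by
  simp only [card_filter]
  exact Equiv.sum_comp σ (fun i => if p i then 1 else 0)

theorem Fin.coe_cycleRange {N : ℕ} (J x : Fin N) :
    (Fin.cycleRange J x : ℕ) = if x < J then (x : ℕ) + 1 else if x = J then 0 else (x : ℕ) := by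
  split_ifs with hlt heq
  · exact Fin.coe_cycleRange_of_lt hlt
  · rw [Fin.coe_cycleRange_of_le heq.le, if_pos heq]
  · rw [Fin.cycleRange_of_gt (lt_of_le_of_ne (not_lt.1 hlt) (Ne.symm heq))]

namespace TypeA

section Inversions

variable {N : ℕ}

def invSet (σ : Perm (Fin N)) : Finset (Fin N × Fin N) := {p | p.1 < p.2 ∧ σ p.2 < σ p.1}

@[simp] theorem mem_invSet {σ : Perm (Fin N)} {p : Fin N × Fin N} :
    p ∈ invSet σ ↔ p.1 < p.2 ∧ σ p.2 < σ p.1 := by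
  simp [invSet]

@[simp] theorem invSet_one : invSet (1 : Perm (Fin N)) = ∅ := by
  ext p
  simpa using le_of_lt

theorem val_apply_eq_card (σ : Perm (Fin N)) (i : Fin N) : (σ i : ℕ) = #{x | σ x < σ i} := by
  rw [card_filter_comp_perm σ (· < σ i), filter_gt_eq_Iio, Fin.card_Iio]

theorem apply_lt_apply_iff_of_invSet_eq {σ τ : Perm (Fin N)} (h : invSet σ = invSet τ)
    (x i : Fin N) : σ x < σ i ↔ τ x < τ i := by
  have hσ := congrArg (fun s => (x, i) ∈ s ∨ (i, x) ∈ s) h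
  simp only [mem_invSet, eq_iff_iff] at hσ
  rcases lt_trichotomy x i with hxi | rfl | hxi
  · simp only [hxi, true_and, not_lt_of_gt hxi, false_and, or_false] at hσ
    rw [← not_iff_not, not_lt, not_lt, le_iff_lt_or_eq, le_iff_lt_or_eq, ← hσ]
    simp [σ.injective.eq_iff, τ.injective.eq_iff, hxi.ne']
  · simp
  · simpa [hxi, not_lt_of_gt hxi] using hσ

theorem eq_of_invSet_eq {σ τ : Perm (Fin N)} (h : invSet σ = invSet τ) : σ = τ := by
  ext i
  rw [val_apply_eq_card, val_apply_eq_card τ]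
  simp only [apply_lt_apply_iff_of_invSet_eq h]

theorem swap_lt_swap_of_val_eq_succ {a b x y : Fin N} (hab : (b : ℕ) = a + 1) (hxy : x < y)
    (hne : (x, y) ≠ (a, b)) : swap a b x < swap a b y := by
  simp only [ne_eq, Prod.mk.injEq, Fin.ext_iff] at hne
  rw [Fin.lt_def] at hxy ⊢
  simp only [swap_apply_def, Fin.ext_iff]
  split_ifs <;> omega

theorem card_invSet_mul_swap_le (σ : Perm (Fin N)) {a b : Fin N} (hab : (b : ℕ) = a + 1) :
    #(invSet (σ * swap a b)) ≤ #(invSet σ) + 1 := by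
  have hmaps : Set.MapsTo (Prod.map (swap a b) (swap a b))
      ((invSet (σ * swap a b)).erase (a, b)) (invSet σ) := by
    intro p hp
    simp only [coe_erase, Set.mem_sdiff, mem_coe, mem_invSet, Perm.mul_apply,
      Set.mem_singleton_iff] at hp
    rw [mem_coe, mem_invSet]
    exact ⟨swap_lt_swap_of_val_eq_succ hab hp.1.1 hp.2, hp.1.2⟩
  have := card_le_card_of_injOn _ hmaps
    ((swap a b).injective.prodMap (swap a b).injective).injOn
  have := pred_card_le_card_erase (s := invSet (σ * swap a b)) (a := (a, b))
  omega

def overlap (σ : Perm (Fin N)) (k j : ℕ) : ℕ := #{i : Fin N | (σ i : ℕ) < k ∧ (i : ℕ) < j}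

theorem card_lt_le_apply (σ : Perm (Fin N)) {j : ℕ} (k : ℕ) (hj : j ≤ N) :
    #{i : Fin N | (i : ℕ) < j ∧ k ≤ (σ i : ℕ)} = j - overlap σ k j := by
  have h := card_filter_add_card_filter_not (s := {i : Fin N | (i : ℕ) < j})
    (fun i => (σ i : ℕ) < k)
  simp only [filter_filter, Fin.card_filter_val_lt, not_lt] at h
  have hc : overlap σ k j = #{i : Fin N | (i : ℕ) < j ∧ (σ i : ℕ) < k} := by
    simp only [overlap, and_comm]
  omega

theorem card_apply_lt_le (σ : Perm (Fin N)) (j : ℕ) {k : ℕ} (hk : k ≤ N) :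
    #{i : Fin N | (σ i : ℕ) < k ∧ j ≤ (i : ℕ)} = k - overlap σ k j := by
  have h := card_filter_add_card_filter_not (s := {i : Fin N | (σ i : ℕ) < k})
    (fun i => (i : ℕ) < j)
  have hσk : #{i : Fin N | (σ i : ℕ) < k} = k := by
    rw [card_filter_comp_perm σ (fun i : Fin N => (i : ℕ) < k), Fin.card_filter_val_lt]
    omega
  simp only [filter_filter, not_lt] at h
  rw [overlap]
  omega

theorem sub_overlap_mul_le_card_invSet (σ : Perm (Fin N)) {j k : ℕ} (hj : j ≤ N) (hk : k ≤ N) :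
    (j - overlap σ k j) * (k - overlap σ k j) ≤ #(invSet σ) := by
  rw [← card_lt_le_apply σ k hj, ← card_apply_lt_le σ j hk, ← card_product]
  refine card_le_card fun p hp => ?_
  simp only [mem_product, mem_filter, mem_univ, true_and] at hp
  rw [mem_invSet, Fin.lt_def, Fin.lt_def]
  omega

theorem overlap_one_eq_zero_iff [NeZero N] {σ : Perm (Fin N)} {j : ℕ} :
    overlap σ 1 j = 0 ↔ ∀ x : Fin N, (x : ℕ) < j → σ x ≠ 0 := by
  simp only [overlap, Nat.lt_one_iff, card_eq_zero, filter_eq_empty_iff, mem_univ, true_implies,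
    not_and', ← Fin.val_ne_iff, Fin.val_zero]

theorem invSet_eq_of_forall_lt_ne_zero [NeZero N] {σ : Perm (Fin N)} {J : Fin N}
    (h0 : ∀ x < J, σ x ≠ 0) (hinv : #(invSet σ) ≤ J) : invSet σ = (Iio J).image (·, J) := by
  obtain ⟨p, hσp⟩ : ∃ p, σ p = 0 := ⟨σ.symm 0, σ.apply_symm_apply 0⟩
  have hsub : (Iio p).image (·, p) ⊆ invSet σ := by
    intro q hq
    obtain ⟨x, hx, rfl⟩ := mem_image.1 hq
    rw [mem_Iio] at hx
    refine mem_invSet.2 ⟨hx, ?_⟩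
    rw [hσp, Fin.pos_iff_ne_zero, ← hσp, σ.injective.ne_iff]
    exact hx.ne
  have hcard : #((Iio p).image (·, p)) = p := by
    rw [card_image_of_injective _ fun x y h => (Prod.mk.inj h).1, Fin.card_Iio]
  have hJp : J ≤ p := not_lt.1 fun h => h0 p h hσp
  have := card_le_card hsub
  obtain rfl : p = J := Fin.ext (by rw [Fin.le_def] at hJp; omega)
  exact (eq_of_subset_of_card_le hsub (by omega)).symm

end Inversions

theorem le_sub_mul_sub {n j k c : ℕ} (hc : c * (n + 1) < k * j) (h2j : 2 * j ≤ n + 1)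
    (hk : k ≤ n + 1) : j ≤ (j - c) * (k - c) := by
  have hcj : c < j := by nlinarith
  have hck : 2 * c < k := by nlinarith
  obtain ⟨a, rfl⟩ := Nat.exists_eq_add_of_lt hcj
  obtain ⟨b, rfl⟩ := Nat.exists_eq_add_of_lt hck
  calc c + a + 1 ≤ (a + 1) * (c + 1) := by nlinarith
    _ ≤ (c + a + 1 - c) * (2 * c + b + 1 - c) := by
      rw [show c + a + 1 - c = a + 1 by omega, show 2 * c + b + 1 - c = c + b + 1 by omega]
      exact Nat.mul_le_mul_left _ (by omega)

section SimpleReflections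

variable {n : ℕ}

/-- Positions are `0`-based: for `1 ≤ m ≤ n` this swaps the coordinates of `e_m` and `e_{m+1}`. -/
def simpleSwap (n m : ℕ) : Perm (Fin (n + 1)) :=
  swap (Fin.ofNat (n + 1) (m - 1)) (Fin.ofNat (n + 1) m)

theorem val_ofNat_of_le {m : ℕ} (hmn : m ≤ n) : (Fin.ofNat (n + 1) m : ℕ) = m := by
  rw [Fin.val_ofNat, Nat.mod_eq_of_lt (Nat.lt_succ_of_le hmn)]

theorem sA_apply {m : ℕ} (hmn : m ≤ n) (v : EuclideanSpace ℝ (Fin (n + 1)))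
    (i : Fin (n + 1)) : sA n m v i = v (simpleSwap n m i) := by
  simp only [sA, PiLp.toLp_apply]
  refine congrArg v.ofLp (Fin.ext ?_)
  have ha := val_ofNat_of_le (n := n) (m := m - 1) (by omega)
  have hb := val_ofNat_of_le hmn
  rw [Fin.val_mk, Nat.mod_eq_of_lt (by split_ifs <;> omega)]
  simp only [simpleSwap, swap_apply_def, Fin.ext_iff, ha, hb]
  split_ifs <;> omega

def permOf (n : ℕ) (l : List ℕ) : Perm (Fin (n + 1)) := l.foldr (fun m σ => σ * simpleSwap n m) 1

theorem permOf_cons (m : ℕ) (l : List ℕ) : permOf n (m :: l) = permOf n l * simpleSwap n m := rfl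

theorem compA_apply {l : List ℕ} (hl : ∀ m ∈ l, m ≤ n) (v : EuclideanSpace ℝ (Fin (n + 1)))
    (i : Fin (n + 1)) : compA n l v i = v (permOf n l i) := by
  induction l generalizing i with
  | nil => rfl
  | cons m t ih =>
    have ht : ∀ x ∈ t, x ≤ n := fun x hx => hl x (List.mem_cons_of_mem m hx)
    change sA n m (compA n t v) i = _
    rw [sA_apply (hl m List.mem_cons_self), ih ht]
    rfl

theorem card_invSet_permOf_le {l : List ℕ} (hl : ∀ m ∈ l, 1 ≤ m ∧ m ≤ n) :
    #(invSet (permOf n l)) ≤ l.length := by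
  induction l with
  | nil => simp [permOf]
  | cons m t ih =>
    rw [permOf_cons, List.length_cons]
    obtain ⟨hm, hmn⟩ := hl m List.mem_cons_self
    have hadj : (Fin.ofNat (n + 1) m : ℕ) = Fin.ofNat (n + 1) (m - 1) + 1 := by
      rw [val_ofNat_of_le hmn, val_ofNat_of_le (by omega)]
      omega
    have := card_invSet_mul_swap_le (permOf n t) hadj
    have := ih fun x hx => hl x (List.mem_cons_of_mem m hx)
    rw [simpleSwap]
    omega

theorem permOf_range_map {j : ℕ} (hj : j ≤ n) :
    permOf n ((List.range j).map (fun i => j - i)) = Fin.cycleRange ⟨j, Nat.lt_succ_of_le hj⟩ := by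
  induction j with
  | zero => exact (Fin.cycleRange_mk_zero _).symm
  | succ j ih =>
    have hl : (List.range (j + 1)).map (fun i => j + 1 - i) =
        (j + 1) :: (List.range j).map (fun i => j - i) := by
      rw [List.range_succ_eq_map, List.map_cons, List.map_map]
      congr 1
      exact List.map_congr_left fun x _ => by simp
    ext x
    rw [hl, permOf_cons, ih (by omega), Perm.mul_apply, Fin.coe_cycleRange, Fin.coe_cycleRange]
    have ha := val_ofNat_of_le (n := n) (m := j) (by omega)
    have hb := val_ofNat_of_le hj
    simp only [simpleSwap, swap_apply_def, Nat.add_sub_cancel, Fin.ext_iff, Fin.lt_def,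
      apply_ite Fin.val, ha, hb]
    split_ifs <;> omega

theorem inner_compA_wtA {l : List ℕ} (hl : ∀ m ∈ l, m ≤ n) {k j : ℕ} (hk : k ≤ n + 1)
    (hj : j ≤ n + 1) :
    ⟪compA n l (wtA n k), wtA n j⟫ = overlap (permOf n l) k j - k * j / ((n : ℝ) + 1) := by
  simp only [PiLp.inner_apply, RCLike.inner_apply, conj_trivial, compA_apply hl]
  set σ := permOf n l
  have hexpand : ∀ i : Fin (n + 1), wtA n j i * wtA n k (σ i) =
      (if (σ i : ℕ) < k ∧ (i : ℕ) < j then 1 else 0) - j / ((n : ℝ) + 1) *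
        (if (σ i : ℕ) < k then 1 else 0) - k / ((n : ℝ) + 1) * (if (i : ℕ) < j then 1 else 0) +
        k / ((n : ℝ) + 1) * (j / ((n : ℝ) + 1)) := by
    intro i
    simp only [wtA, PiLp.toLp_apply]
    by_cases h1 : (σ i : ℕ) < k <;> by_cases h2 : (i : ℕ) < j <;> simp [h1, h2] <;> ring
  have hσk : #{i : Fin (n + 1) | (σ i : ℕ) < k} = k := by
    rw [card_filter_comp_perm σ (fun i : Fin (n + 1) => (i : ℕ) < k), Fin.card_filter_val_lt]
    omega
  have hj' : #{i : Fin (n + 1) | (i : ℕ) < j} = j := by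
    rw [Fin.card_filter_val_lt]
    omega
  rw [sum_congr rfl fun i _ => hexpand i, sum_add_distrib, sum_sub_distrib, sum_sub_distrib,
    ← mul_sum, ← mul_sum, sum_boole,
    sum_boole, sum_boole, sum_const, card_univ, Fintype.card_fin, hσk, hj', ← overlap]
  simp only [nsmul_eq_mul]
  push_cast
  field_simp
  ring

theorem inner_compA_wtA_neg_iff {l : List ℕ} (hl : ∀ m ∈ l, m ≤ n) {k j : ℕ} (hk : k ≤ n + 1)
    (hj : j ≤ n + 1) :
    ⟪compA n l (wtA n k), wtA n j⟫ < 0 ↔ overlap (permOf n l) k j * (n + 1) < k * j := by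
  rw [inner_compA_wtA hl hk hj, sub_neg, lt_div_iff₀ (by positivity)]
  norm_cast

theorem range_map_sub_bounds {j : ℕ} (hj : j ≤ n) :
    ∀ m ∈ (List.range j).map (fun i => j - i), 1 ≤ m ∧ m ≤ n := by
  simp only [List.mem_map, List.mem_range]
  omega

theorem permOf_range_map_apply_ne_zero {j : ℕ} (hj : j ≤ n) (x : Fin (n + 1)) (hx : (x : ℕ) < j) :
    permOf n ((List.range j).map (fun i => j - i)) x ≠ 0 := by
  rw [permOf_range_map hj, ne_eq, Fin.ext_iff, Fin.coe_cycleRange_of_lt hx]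
  exact Nat.succ_ne_zero x

theorem inner_compA_range_map_wtA_one_neg {j : ℕ} (hj1 : 1 ≤ j) (hj : j ≤ n) :
    ⟪compA n ((List.range j).map (fun i => j - i)) (wtA n 1), wtA n j⟫ < 0 := by
  rw [inner_compA_wtA_neg_iff (fun m hm => (range_map_sub_bounds hj m hm).2) (by omega)
    (by omega), overlap_one_eq_zero_iff.2 (permOf_range_map_apply_ne_zero hj)]
  omega

theorem le_length_of_inner_compA_wtA_neg {j k : ℕ} (h2j : 2 * j ≤ n + 1) (hk : k ≤ n + 1)
    {l : List ℕ} (hl : ∀ m ∈ l, 1 ≤ m ∧ m ≤ n) (hneg : ⟪compA n l (wtA n k), wtA n j⟫ < 0) :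
    j ≤ l.length := by
  have hc := (inner_compA_wtA_neg_iff (fun m hm => (hl m hm).2) hk (by omega)).1 hneg
  calc j ≤ (j - overlap (permOf n l) k j) * (k - overlap (permOf n l) k j) :=
        le_sub_mul_sub hc h2j hk
    _ ≤ #(invSet (permOf n l)) := sub_overlap_mul_le_card_invSet _ (by omega) hk
    _ ≤ l.length := card_invSet_permOf_le hl

theorem compA_eq_of_inner_compA_wtA_one_neg {j : ℕ} (hj : j ≤ n) {l : List ℕ}
    (hl : ∀ m ∈ l, 1 ≤ m ∧ m ≤ n) (hlen : l.length ≤ j)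
    (hneg : ⟪compA n l (wtA n 1), wtA n j⟫ < 0) :
    compA n l = compA n ((List.range j).map (fun i => j - i)) := by
  set l₀ := (List.range j).map (fun i => j - i)
  have hl₀ : ∀ m ∈ l₀, 1 ≤ m ∧ m ≤ n := range_map_sub_bounds hj
  have hc := (inner_compA_wtA_neg_iff (fun m hm => (hl m hm).2) (by omega) (by omega)).1 hneg
  have h0 : overlap (permOf n l) 1 j = 0 := by nlinarith
  let J : Fin (n + 1) := ⟨j, Nat.lt_succ_of_le hj⟩
  have hσ := invSet_eq_of_forall_lt_ne_zero (J := J) (overlap_one_eq_zero_iff.1 h0)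
    ((card_invSet_permOf_le hl).trans hlen)
  have hσ₀ := invSet_eq_of_forall_lt_ne_zero (J := J) (permOf_range_map_apply_ne_zero hj)
    ((card_invSet_permOf_le hl₀).trans (by simp [l₀, J]))
  have hperm := eq_of_invSet_eq (hσ.trans hσ₀.symm)
  funext v
  ext i
  rw [compA_apply (fun m hm => (hl m hm).2), compA_apply (fun m hm => (hl₀ m hm).2), hperm]

end SimpleReflections
end TypeA

open TypeA in
theorem statement3_general (n j : ℕ) (hj1 : 1 ≤ j) (hj : j ≤ (n + 1) / 2) :
    IsLeast {k : ℕ | ∃ l : List ℕ, (∀ m ∈ l, 1 ≤ m ∧ m ≤ n) ∧ l.length = k ∧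
        ⟪compA n l (wtA n 1), wtA n j⟫ < 0} j ∧
    (∀ k, 1 ≤ k → k ≤ n → ∀ l : List ℕ, (∀ m ∈ l, 1 ≤ m ∧ m ≤ n) →
        ⟪compA n l (wtA n k), wtA n j⟫ < 0 → j ≤ l.length) ∧
    (∀ l : List ℕ, (∀ m ∈ l, 1 ≤ m ∧ m ≤ n) → l.length ≤ j →
        ⟪compA n l (wtA n 1), wtA n j⟫ < 0 →
        compA n l = compA n ((List.range j).map (fun i => j - i))) := by
  have hjn : j ≤ n := by omega
  have h2j : 2 * j ≤ n + 1 := by omega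
  refine ⟨⟨⟨_, range_map_sub_bounds hjn, by simp, inner_compA_range_map_wtA_one_neg hj1 hjn⟩, ?_⟩,
    fun k _ hk l hl hneg ↦ le_length_of_inner_compA_wtA_neg h2j (by omega) hl hneg,
    fun l hl hlen hneg ↦ compA_eq_of_inner_compA_wtA_one_neg hjn hl hlen hneg⟩
  rintro _ ⟨l, hl, rfl, hneg⟩
  exact le_length_of_inner_compA_wtA_neg h2j (by omega) hl hneg

theorem statement3 (n j : ℕ) (hn : 1 ≤ n) (hj1 : 1 ≤ j) (hj : j ≤ (n + 1) / 2) :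
    IsLeast {k : ℕ | ∃ l : List ℕ, (∀ m ∈ l, 1 ≤ m ∧ m ≤ n) ∧ l.length = k ∧
        ⟪compA n l (wtA n 1), wtA n j⟫ < 0} j ∧
    (∀ k, 1 ≤ k → k ≤ n → ∀ l : List ℕ, (∀ m ∈ l, 1 ≤ m ∧ m ≤ n) →
        ⟪compA n l (wtA n k), wtA n j⟫ < 0 → j ≤ l.length) ∧
    (∀ l : List ℕ, (∀ m ∈ l, 1 ≤ m ∧ m ≤ n) → l.length ≤ j →
        ⟪compA n l (wtA n 1), wtA n j⟫ < 0 →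
        compA n l = compA n ((List.range j).map (fun i => j - i))) :=
  statement3_general n j hj1 hj
end
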